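/- Let Δx > 0 and let (v_p)_{p∈ℤ} and (w_p)_{p∈ℤ} be real sequences with Σ_p |v_p| < ∞ and Σ_p |w_p| < ∞. Define c^v_{i+1/2} = Δx Σ_{p∈ℤ} μ(x_{i+1/2−p}) β(v_p) and c^w_{i+1/2} = Δx Σ_{p∈ℤ} μ(x_{i+1/2−p}) β(w_p), where x_{i+1/2−p} = (i − p)Δx + Δx/2. Then Σ_{i∈ℤ} | (c^v_{i+1/2} − c^v_{i−1/2}) − (c^w_{i+1/2} − c^w_{i−1/2}) | ≤ Lip(β) ( ∫_ℝ |μ'(x)| dx ) Δx Σ_{p∈ℤ} |v_p − w_p|. -/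

import Mathlib

/-!
With `g k = μ (x_{k+1/2}) - μ (x_{k-1/2})` and `f p = β (v p) - β (w p)`, the double difference
at `i` is `Δx * Σ_p g (i - p) * f p`, a discrete convolution. Young's inequality on `ℓ¹(ℤ)`
bounds the sum over `i` of its absolute values by `Δx * ‖g‖₁ * ‖f‖₁`; the fundamental theorem of
calculus on the disjoint cells `(x_{k-1/2}, x_{k+1/2}]` gives `‖g‖₁ ≤ ∫ |μ'|`, and `β` being
Lipschitz gives `‖f‖₁ ≤ Lip(β) * Σ_p |v p - w p|`.
-/

open MeasureTheory

/-- The discrete convolution `c_{i+1/2} = Δx Σ_p μ(x_{i+1/2−p}) β(v_p)`,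
where `x_{i+1/2−p} = (i − p)Δx + Δx/2`; indexed by `i`. -/
noncomputable def cdisc (μ β : ℝ → ℝ) (Δx : ℝ) (v : ℤ → ℝ) (i : ℤ) : ℝ :=
  Δx * ∑' p : ℤ, μ (((i - p : ℤ) : ℝ) * Δx + Δx / 2) * β (v p)

theorem abs_sub_le_setIntegral_Ioc_abs_deriv {f : ℝ → ℝ} (hf : Differentiable ℝ f)
    (hf' : Integrable (deriv f)) {a b : ℝ} (hab : a ≤ b) :
    |f b - f a| ≤ ∫ t in Set.Ioc a b, |deriv f t| := by
  rw [← intervalIntegral.integral_deriv_eq_sub (fun t _ => hf t) hf'.intervalIntegrable,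
    ← intervalIntegral.integral_of_le hab]
  exact intervalIntegral.abs_integral_le_integral_abs hab

section SampledVariation

variable {ι : Type*} [LinearOrder ι] [PredOrder ι] [Countable ι] {x : ι → ℝ} {f : ℝ → ℝ}

theorem Monotone.hasSum_setIntegral_Ioc_pred (hx : Monotone x) {h : ℝ → ℝ} (hh : Integrable h) :
    HasSum (fun k => ∫ t in Set.Ioc (x (Order.pred k)) (x k), h t)
      (∫ t in ⋃ k, Set.Ioc (x (Order.pred k)) (x k), h t) :=
  hasSum_integral_iUnion (fun _ => measurableSet_Ioc) hx.pairwise_disjoint_on_Ioc_pred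
    hh.integrableOn

theorem Monotone.summable_abs_sub_comp_pred (hx : Monotone x) (hf : Differentiable ℝ f)
    (hf' : Integrable (deriv f)) : Summable fun k => |f (x k) - f (x (Order.pred k))| :=
  (hx.hasSum_setIntegral_Ioc_pred hf'.abs).summable.of_nonneg_of_le (fun _ => abs_nonneg _)
    fun k => abs_sub_le_setIntegral_Ioc_abs_deriv hf hf' (hx (Order.pred_le k))

theorem Monotone.tsum_abs_sub_comp_pred_le (hx : Monotone x) (hf : Differentiable ℝ f)
    (hf' : Integrable (deriv f)) :
    ∑' k, |f (x k) - f (x (Order.pred k))| ≤ ∫ t, |deriv f t| := by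
  have hI := hx.hasSum_setIntegral_Ioc_pred hf'.abs
  calc ∑' k, |f (x k) - f (x (Order.pred k))|
      ≤ ∑' k, ∫ t in Set.Ioc (x (Order.pred k)) (x k), |deriv f t| :=
        (hx.summable_abs_sub_comp_pred hf hf').tsum_le_tsum
          (fun k => abs_sub_le_setIntegral_Ioc_abs_deriv hf hf' (hx (Order.pred_le k)))
          hI.summable
    _ = ∫ t in ⋃ k, Set.Ioc (x (Order.pred k)) (x k), |deriv f t| := hI.tsum_eq
    _ ≤ ∫ t, |deriv f t| := setIntegral_le_integral hf'.abs (.of_forall fun _ => abs_nonneg _)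

end SampledVariation

theorem tsum_abs_tsum_mul_sub_le {G : Type*} [AddGroup G] {g f : G → ℝ}
    (hg : Summable fun k => |g k|) (hf : Summable fun p => |f p|) :
    ∑' i, |∑' p, g (i - p) * f p| ≤ (∑' k, |g k|) * ∑' p, |f p| := by
  set F : G → G → ℝ := fun p i => |f p| * |g (i - p)|
  have hrow : ∀ p, HasSum (F p) (|f p| * ∑' k, |g k|) := fun p =>
    ((Equiv.subRight p).hasSum_iff.mpr hg.hasSum).mul_left _
  have hF : Summable (Function.uncurry F) :=
    (summable_prod_of_nonneg fun q => mul_nonneg (abs_nonneg _) (abs_nonneg _)).mpr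
      ⟨fun p => (hrow p).summable, (hf.mul_right _).congr fun p => (hrow p).tsum_eq.symm⟩
  have hcol : ∀ i, Summable fun p => F p i := hF.prod_symm.prod_factor
  have hcols : Summable fun i => ∑' p, F p i := hF.prod_symm.prod
  have hbound : ∀ i, |∑' p, g (i - p) * f p| ≤ ∑' p, F p i := fun i =>
    tsum_of_norm_bounded (hcol i).hasSum fun p => by
      rw [Real.norm_eq_abs, abs_mul, mul_comm]
  calc ∑' i, |∑' p, g (i - p) * f p| ≤ ∑' i, ∑' p, F p i :=
        (hcols.of_nonneg_of_le (fun _ => abs_nonneg _) hbound).tsum_le_tsum hbound hcols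
    _ = ∑' p, ∑' i, F p i := hF.tsum_comm
    _ = ∑' p, |f p| * ∑' k, |g k| := tsum_congr fun p => (hrow p).tsum_eq
    _ = (∑' k, |g k|) * ∑' p, |f p| := by rw [tsum_mul_right, mul_comm]

section LipschitzSums

variable {ι : Type*} {β : ℝ → ℝ} {K : NNReal} {v w : ι → ℝ}

theorem LipschitzWith.summable_abs_comp_sub (hβ : LipschitzWith K β)
    (h : Summable fun p => |v p - w p|) : Summable fun p => |β (v p) - β (w p)| :=
  (h.mul_left (K : ℝ)).of_nonneg_of_le (fun _ => abs_nonneg _) fun p => by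
    simpa only [Real.dist_eq] using hβ.dist_le_mul (v p) (w p)

theorem LipschitzWith.tsum_abs_comp_sub_le (hβ : LipschitzWith K β)
    (h : Summable fun p => |v p - w p|) :
    ∑' p, |β (v p) - β (w p)| ≤ K * ∑' p, |v p - w p| := by
  rw [← tsum_mul_left]
  exact (hβ.summable_abs_comp_sub h).tsum_le_tsum
    (fun p => by simpa only [Real.dist_eq] using hβ.dist_le_mul (v p) (w p)) (h.mul_left (K : ℝ))

theorem LipschitzWith.summable_abs_comp (hβ : LipschitzWith K β) (hβ0 : β 0 = 0)
    (hv : Summable fun p => |v p|) : Summable fun p => |β (v p)| := by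
  simpa only [Pi.zero_apply, hβ0, sub_zero] using
    hβ.summable_abs_comp_sub (w := 0) (by simpa only [Pi.zero_apply, sub_zero] using hv)

end LipschitzSums

theorem summable_mul_of_abs_le {ι : Type*} {m u : ι → ℝ} {M : ℝ} (hm : ∀ p, |m p| ≤ M)
    (hu : Summable fun p => |u p|) : Summable fun p => m p * u p :=
  (hu.mul_left M).of_norm_bounded fun p => by
    rw [Real.norm_eq_abs, abs_mul]
    exact mul_le_mul_of_nonneg_right (hm p) (abs_nonneg _)

theorem cdisc_sub_sub_cdisc_sub {μ β : ℝ → ℝ} {M : ℝ} (hμ : ∀ y, |μ y| ≤ M) (Δx : ℝ)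
    {v w : ℤ → ℝ} (hv : Summable fun p => |β (v p)|) (hw : Summable fun p => |β (w p)|)
    (i : ℤ) :
    (cdisc μ β Δx v i - cdisc μ β Δx v (i - 1)) - (cdisc μ β Δx w i - cdisc μ β Δx w (i - 1)) =
      Δx * ∑' p, (μ (((i - p : ℤ) : ℝ) * Δx + Δx / 2)
        - μ (((i - p - 1 : ℤ) : ℝ) * Δx + Δx / 2)) * (β (v p) - β (w p)) := by
  have hs : ∀ (j : ℤ) {u : ℤ → ℝ}, (Summable fun p => |β (u p)|) →
      Summable fun p => μ (((j - p : ℤ) : ℝ) * Δx + Δx / 2) * β (u p) :=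
    fun j u hu => summable_mul_of_abs_le (fun _ => hμ _) hu
  have hshift : ∀ p : ℤ, i - 1 - p = i - p - 1 := fun p => sub_right_comm _ _ _
  simp only [cdisc, ← mul_sub]
  rw [← (hs i hv).tsum_sub (hs (i - 1) hv), ← (hs i hw).tsum_sub (hs (i - 1) hw),
    ← ((hs i hv).sub (hs (i - 1) hv)).tsum_sub ((hs i hw).sub (hs (i - 1) hw))]
  simp only [hshift]
  congr 1
  exact tsum_congr fun p => by ring

/-- `Σ_i |(c^v_{i+1/2} − c^v_{i−1/2}) − (c^w_{i+1/2} − c^w_{i−1/2})|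
      ≤ Lip(β) (∫_ℝ |μ'|) Δx Σ_p |v_p − w_p|`. -/
theorem stmt17 (β μ : ℝ → ℝ) (Lβ : NNReal)
    (hβ : LipschitzWith Lβ β) (hβ0 : β 0 = 0)
    (hμ : ContDiff ℝ 1 μ) (hμb : ∃ M, ∀ x, |μ x| ≤ M)
    (hμ' : Integrable (deriv μ))
    (Δx : ℝ) (hΔx : 0 < Δx) (v w : ℤ → ℝ)
    (hv : Summable fun p : ℤ => |v p|) (hw : Summable fun p : ℤ => |w p|) :
    (∑' i : ℤ, |(cdisc μ β Δx v i - cdisc μ β Δx v (i - 1))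
                 - (cdisc μ β Δx w i - cdisc μ β Δx w (i - 1))|)
      ≤ (Lβ : ℝ) * (∫ x : ℝ, |deriv μ x|) * (Δx * ∑' p : ℤ, |v p - w p|) := by
  obtain ⟨M, hM⟩ := hμb
  have hx : Monotone fun k : ℤ => (k : ℝ) * Δx + Δx / 2 := fun a b hab => by
    dsimp only
    gcongr
  have hdμ := hμ.differentiable one_ne_zero
  have hg := hx.summable_abs_sub_comp_pred hdμ hμ'
  have hgμ := hx.tsum_abs_sub_comp_pred_le hdμ hμ'
  simp only [Order.pred_eq_sub_one] at hg hgμ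
  have hvw : Summable fun p => |v p - w p| :=
    (hv.add hw).of_nonneg_of_le (fun _ => abs_nonneg _) fun p => abs_sub _ _
  calc _ = Δx * ∑' i : ℤ, |∑' p : ℤ, (μ (((i - p : ℤ) : ℝ) * Δx + Δx / 2)
          - μ (((i - p - 1 : ℤ) : ℝ) * Δx + Δx / 2)) * (β (v p) - β (w p))| := by
        simp only [cdisc_sub_sub_cdisc_sub hM Δx (hβ.summable_abs_comp hβ0 hv)
          (hβ.summable_abs_comp hβ0 hw), abs_mul, abs_of_pos hΔx, tsum_mul_left]
    _ ≤ Δx * ((∑' k : ℤ, |μ (k * Δx + Δx / 2) - μ (((k - 1 : ℤ) : ℝ) * Δx + Δx / 2)|)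
          * ∑' p, |β (v p) - β (w p)|) := by
        gcongr
        exact tsum_abs_tsum_mul_sub_le hg (hβ.summable_abs_comp_sub hvw)
    _ ≤ Δx * ((∫ t, |deriv μ t|) * (Lβ * ∑' p, |v p - w p|)) := by
        gcongr
        exact hβ.tsum_abs_comp_sub_le hvw
    _ = (Lβ : ℝ) * (∫ x : ℝ, |deriv μ x|) * (Δx * ∑' p : ℤ, |v p - w p|) := by ring
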